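/- The Riordan group R′(ℤ) is an URE-group: for every integer n ≥ 1, if (α, ω) and (α′, ω′) are two pairs with α, α′ ∈ ℤ⟦x⟧ of constant coefficient 1 and ω, ω′ ∈ J(ℤ) satisfying ω^[n] = ω′^[n] and ∏_{i=0}^{n−1} (α ∘ ω^[i]) = ∏_{i=0}^{n−1} (α′ ∘ ω′^[i]) (equivalently, R(α,ω)^n = R(α′,ω′)^n), then α = α′ and ω = ω′. -/

import Mathlib

open PowerSeries Finset

/-- Composition `f ∘ g` of formal power series (substitution of `g` into `f`).
This coefficientwise formula agrees with the usual substitution whenever the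
constant coefficient of `g` is zero, since then `g ^ j` has order at least `j`. -/
noncomputable def psComp {Z : Type*} [CommRing Z] (f g : Z⟦X⟧) : Z⟦X⟧ :=
  PowerSeries.mk fun n => ∑ j ∈ Finset.range (n + 1), coeff j f * coeff n (g ^ j)

/-- The `m`-th compositional iterate: `ω^[0] = X` and `ω^[m+1] = ω ∘ ω^[m]`. -/
noncomputable def psIter {Z : Type*} [CommRing Z] (ω : Z⟦X⟧) : ℕ → Z⟦X⟧
  | 0 => PowerSeries.X
  | m + 1 => psComp ω (psIter ω m)

/-! If `ω ≠ ω'`, let `k` be the first degree in which they differ. Up to degree `k`, composition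
is then a first-order computation: `ω^[m]` and `ω'^[m]` agree below degree `k`, and since all the
series involved have linear coefficient `1`, their `k`-th coefficients differ by `m (ω_k - ω'_k)`.
So `ω^[n] = ω'^[n]` forces `n (ω_k - ω'_k) = 0`, which is impossible in `ℤ`. Once `ω = ω'`, the
factors `α ∘ ω^[i]` and `α' ∘ ω^[i]` have constant coefficient `1` and differ first in degree `k`
by `α_k - α'_k`, so the two products differ in degree `k` by `n (α_k - α'_k)`. -/

theorem mul_dvd_pow_sub_pow_of_dvd {R : Type*} [CommRing R] {a b x y : R} (hx : a ∣ x)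
    (hy : a ∣ y) (hxy : b ∣ x - y) {j : ℕ} (hj : 2 ≤ j) : a * b ∣ x ^ j - y ^ j := by
  obtain ⟨m, rfl⟩ := Nat.exists_eq_add_of_le' hj
  have hsplit : x ^ (m + 2) - y ^ (m + 2)
      = x ^ (m + 1) * (x - y) + y * (x ^ (m + 1) - y ^ (m + 1)) := by ring
  rw [hsplit]
  exact dvd_add (mul_dvd_mul (hx.trans (dvd_pow_self x m.succ_ne_zero)) hxy)
    (mul_dvd_mul hy (hxy.trans (sub_dvd_pow_sub_pow x y (m + 1))))

namespace PowerSeries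

variable {R : Type*} [CommRing R]

theorem coeff_pow_self_of_constantCoeff_eq_zero {g : R⟦X⟧} (hg : constantCoeff g = 0) (k : ℕ) :
    coeff k (g ^ k) = coeff 1 g ^ k := by
  obtain ⟨h, rfl⟩ := X_dvd_iff.2 hg
  simp [mul_pow, coeff_X_pow_mul']

theorem coeff_mul_of_X_pow_dvd {k : ℕ} {h : R⟦X⟧} (hh : X ^ k ∣ h) (p : R⟦X⟧) :
    coeff k (h * p) = coeff k h * constantCoeff p := by
  obtain ⟨d, rfl⟩ := hh
  simp [mul_assoc, coeff_X_pow_mul']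

theorem eq_of_forall_coeff_sub_eq_zero_of_X_pow_dvd {f g : R⟦X⟧}
    (h : ∀ k, X ^ k ∣ f - g → coeff k (f - g) = 0) : f = g := by
  by_contra hne
  exact coeff_order (sub_ne_zero.2 hne) (h _ X_pow_order_dvd)

theorem coeff_prod_sub_prod_of_X_pow_dvd {ι : Type*} [LinearOrder ι] {s : Finset ι}
    {F F' : ι → R⟦X⟧} {k : ℕ} (hF : ∀ i ∈ s, constantCoeff (F i) = 1)
    (hF' : ∀ i ∈ s, constantCoeff (F' i) = 1) (hdvd : ∀ i ∈ s, X ^ k ∣ F i - F' i) :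
    coeff k (∏ i ∈ s, F i - ∏ i ∈ s, F' i) = ∑ i ∈ s, coeff k (F i - F' i) := by
  have hexpand := prod_sub_ordered s F (fun i => F i - F' i)
  simp only [sub_sub_cancel] at hexpand
  rw [hexpand, sub_sub_cancel, map_sum]
  refine sum_congr rfl fun i hi => ?_
  rw [mul_assoc, coeff_mul_of_X_pow_dvd (hdvd i hi), map_mul, map_prod, map_prod,
    prod_eq_one fun j hj => hF' j (mem_filter.1 hj).1,
    prod_eq_one fun j hj => hF j (mem_filter.1 hj).1, mul_one, mul_one]

end PowerSeries

section

variable {R : Type*} [CommRing R]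

theorem coeff_psComp (f g : R⟦X⟧) (n : ℕ) :
    coeff n (psComp f g) = ∑ j ∈ range (n + 1), coeff j f * coeff n (g ^ j) :=
  coeff_mk _ _

theorem constantCoeff_psComp (f g : R⟦X⟧) : constantCoeff (psComp f g) = constantCoeff f := by
  rw [← coeff_zero_eq_constantCoeff_apply, coeff_psComp]
  simp

theorem coeff_one_psComp (f g : R⟦X⟧) : coeff 1 (psComp f g) = coeff 1 f * coeff 1 g := by
  simp [coeff_psComp, sum_range_succ, coeff_one]

theorem psComp_sub_left (f f' g : R⟦X⟧) : psComp (f - f') g = psComp f g - psComp f' g := by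
  ext n
  simp [coeff_psComp, sub_mul, sum_sub_distrib]

theorem coeff_psComp_sub_psComp_right (f g g' : R⟦X⟧) (n : ℕ) :
    coeff n (psComp f g - psComp f g') =
      ∑ j ∈ range (n + 1), coeff j f * coeff n (g ^ j - g' ^ j) := by
  simp [coeff_psComp, mul_sub, sum_sub_distrib]

theorem X_pow_dvd_psComp {k : ℕ} {h : R⟦X⟧} (hh : X ^ k ∣ h) (g : R⟦X⟧) :
    X ^ k ∣ psComp h g := by
  refine X_pow_dvd_iff.2 fun m hm => ?_
  rw [coeff_psComp]
  refine sum_eq_zero fun j hj => ?_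
  rw [X_pow_dvd_iff.1 hh j (by rw [mem_range] at hj; omega), zero_mul]

theorem coeff_psComp_of_X_pow_dvd {k : ℕ} {h g : R⟦X⟧} (hh : X ^ k ∣ h)
    (hg : constantCoeff g = 0) : coeff k (psComp h g) = coeff k h * coeff 1 g ^ k := by
  rw [coeff_psComp, sum_range_succ, sum_eq_zero, zero_add,
    coeff_pow_self_of_constantCoeff_eq_zero hg]
  intro j hj
  rw [X_pow_dvd_iff.1 hh j (mem_range.1 hj), zero_mul]

theorem psComp_sub_psComp (f f' g g' : R⟦X⟧) :
    psComp f g - psComp f' g' = (psComp f g - psComp f g') + psComp (f - f') g' := by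
  rw [psComp_sub_left]
  abel

theorem X_pow_dvd_psComp_sub_psComp_right {k : ℕ} {g g' : R⟦X⟧} (hgg' : X ^ k ∣ g - g')
    (f : R⟦X⟧) : X ^ k ∣ psComp f g - psComp f g' := by
  refine X_pow_dvd_iff.2 fun m hm => ?_
  rw [coeff_psComp_sub_psComp_right]
  refine sum_eq_zero fun j _ => ?_
  rw [X_pow_dvd_iff.1 (hgg'.trans (sub_dvd_pow_sub_pow g g' j)) m hm, mul_zero]

/-- For `j ≥ 2`, `X ^ (k + 1)` divides `g ^ j - g' ^ j`, so only the linear term of `f` is seen. -/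
theorem coeff_psComp_sub_psComp_right_of_X_pow_dvd {k : ℕ} {g g' : R⟦X⟧}
    (hg : constantCoeff g = 0) (hg' : constantCoeff g' = 0) (hgg' : X ^ k ∣ g - g')
    (f : R⟦X⟧) : coeff k (psComp f g - psComp f g') = coeff 1 f * coeff k (g - g') := by
  have hhigher (j : ℕ) (hj : 2 ≤ j) : coeff k (g ^ j - g' ^ j) = 0 := by
    have hdvd := mul_dvd_pow_sub_pow_of_dvd (X_dvd_iff.2 hg) (X_dvd_iff.2 hg') hgg' hj
    rw [← pow_succ'] at hdvd
    exact X_pow_dvd_iff.1 hdvd k k.lt_succ_self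
  rcases k.eq_zero_or_pos with rfl | hk
  · simp [coeff_psComp_sub_psComp_right, hg, hg']
  rw [coeff_psComp_sub_psComp_right, sum_eq_single 1, pow_one, pow_one]
  · rintro (_ | _ | j) _ hj1
    · simp
    · contradiction
    · rw [hhigher _ (by omega), mul_zero]
  · exact fun h => absurd (mem_range.2 (by omega)) h

theorem constantCoeff_psIter {ω : R⟦X⟧} (hω0 : constantCoeff ω = 0) (m : ℕ) :
    constantCoeff (psIter ω m) = 0 := by
  cases m with
  | zero => simp [psIter]
  | succ m => rw [psIter, constantCoeff_psComp, hω0]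

theorem coeff_one_psIter {ω : R⟦X⟧} (hω1 : coeff 1 ω = 1) (m : ℕ) :
    coeff 1 (psIter ω m) = 1 := by
  induction m with
  | zero => simp [psIter]
  | succ m ih => rw [psIter, coeff_one_psComp, hω1, ih, one_mul]

theorem X_pow_dvd_psIter_sub_psIter {k : ℕ} {ω ω' : R⟦X⟧} (h : X ^ k ∣ ω - ω') (m : ℕ) :
    X ^ k ∣ psIter ω m - psIter ω' m := by
  induction m with
  | zero => simp [psIter]
  | succ m ih =>
    rw [psIter, psIter, psComp_sub_psComp]
    exact dvd_add (X_pow_dvd_psComp_sub_psComp_right ih ω) (X_pow_dvd_psComp h _)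

theorem coeff_psIter_sub_psIter {k : ℕ} {ω ω' : R⟦X⟧}
    (hω0 : constantCoeff ω = 0) (hω1 : coeff 1 ω = 1)
    (hω'0 : constantCoeff ω' = 0) (hω'1 : coeff 1 ω' = 1) (h : X ^ k ∣ ω - ω') (m : ℕ) :
    coeff k (psIter ω m - psIter ω' m) = m * coeff k (ω - ω') := by
  induction m with
  | zero => simp [psIter]
  | succ m ih =>
    rw [psIter, psIter, psComp_sub_psComp, map_add,
      coeff_psComp_sub_psComp_right_of_X_pow_dvd (constantCoeff_psIter hω0 m)
        (constantCoeff_psIter hω'0 m) (X_pow_dvd_psIter_sub_psIter h m),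
      coeff_psComp_of_X_pow_dvd h (constantCoeff_psIter hω'0 m), hω1, coeff_one_psIter hω'1, ih]
    push_cast
    ring

theorem coeff_prod_psComp_sub_prod_psComp {ι : Type*} [LinearOrder ι] {s : Finset ι}
    {G : ι → R⟦X⟧} (hG0 : ∀ i ∈ s, constantCoeff (G i) = 0) (hG1 : ∀ i ∈ s, coeff 1 (G i) = 1)
    {k : ℕ} {α α' : R⟦X⟧} (hα : constantCoeff α = 1) (hα' : constantCoeff α' = 1)
    (h : X ^ k ∣ α - α') :
    coeff k (∏ i ∈ s, psComp α (G i) - ∏ i ∈ s, psComp α' (G i)) = #s * coeff k (α - α') := by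
  rw [coeff_prod_sub_prod_of_X_pow_dvd (fun i _ => (constantCoeff_psComp α (G i)).trans hα)
      (fun i _ => (constantCoeff_psComp α' (G i)).trans hα')
      (fun i _ => psComp_sub_left α α' (G i) ▸ X_pow_dvd_psComp h (G i)),
    sum_congr rfl fun i hi => by
      rw [← psComp_sub_left, coeff_psComp_of_X_pow_dvd h (hG0 i hi), hG1 i hi, one_pow, mul_one],
    sum_const, nsmul_eq_mul]

end

/-- the Riordan group `ℛ′(ℤ)` is an URE-group: if `R(α,ω)^n = R(α',ω')^n`
(for `n ≥ 1`), i.e. `ω^[n] = ω'^[n]` and `∏_{i=0}^{n−1}(α∘ω^[i]) = ∏_{i=0}^{n−1}(α'∘ω'^[i])`,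
then `α = α'` and `ω = ω'`. -/
theorem riordan_group_int_URE (n : ℕ) (hn : 1 ≤ n) (α α' ω ω' : ℤ⟦X⟧)
    (hα : constantCoeff α = 1) (hα' : constantCoeff α' = 1)
    (hω0 : constantCoeff ω = 0) (hω1 : coeff 1 ω = 1)
    (hω'0 : constantCoeff ω' = 0) (hω'1 : coeff 1 ω' = 1)
    (hiter : psIter ω n = psIter ω' n)
    (hprod : ∏ i ∈ Finset.range n, psComp α (psIter ω i)
        = ∏ i ∈ Finset.range n, psComp α' (psIter ω' i)) :
    α = α' ∧ ω = ω' := by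
  have hn0 : (n : ℤ) ≠ 0 := by omega
  have hω : ω = ω' := eq_of_forall_coeff_sub_eq_zero_of_X_pow_dvd fun k hk => by
    have hcoeff := coeff_psIter_sub_psIter hω0 hω1 hω'0 hω'1 hk n
    rw [hiter, sub_self, map_zero, eq_comm] at hcoeff
    exact (mul_eq_zero.1 hcoeff).resolve_left hn0
  subst hω
  refine ⟨eq_of_forall_coeff_sub_eq_zero_of_X_pow_dvd fun k hk => ?_, rfl⟩
  have hcoeff := coeff_prod_psComp_sub_prod_psComp (s := range n)
    (fun i _ => constantCoeff_psIter hω0 i) (fun i _ => coeff_one_psIter hω1 i) hα hα' hk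
  rw [hprod, sub_self, map_zero, card_range, eq_comm] at hcoeff
  exact (mul_eq_zero.1 hcoeff).resolve_left hn0
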